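/- Let ρ be a positive-definite density matrix on ℂ^d with spectral decomposition ρ = Σ_n λ_n u_n u_nᴴ, let β ∈ ℝ, K a finite index set, ω : K → ℝ, and L : K → M_d(ℂ). Assume there is an involution σ : K → K (σ∘σ = id) with ω_{σ(k)} = −ω_k and L_{σ(k)} = e^{−β ω_k/2}·L_kᴴ for all k. Then for every Hermitian d×d matrix X, (1/2)·Σ_{k∈K} e^{−β ω_k/2}·⟨[L_kᴴ, X], S_{ρ, β ω_k}([L_kᴴ, X])⟩ ≤ (1/2)·Σ_{k∈K} ‖[L_k, X]‖_∞², where the left-hand side is a nonnegative real number. -/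

import Mathlib

set_option maxHeartbeats 1000000
set_option synthInstance.maxHeartbeats 400000

open Matrix
open scoped ComplexOrder

/-- The logarithmic mean of two reals: `Φ(x,y) = (x−y)/(ln x − ln y)` for `x ≠ y`, `Φ(x,x) = x`. -/
noncomputable def logMean (x y : ℝ) : ℝ :=
  if x = y then x else (x - y) / (Real.log x - Real.log y)

/-- The tilted operator `S_{φ,θ}` associated with the spectral data `(lam, u)` of `φ`:
`S_{φ,θ}(X) = Σ_{n,m} Φ(e^{θ/2} λ_n, e^{−θ/2} λ_m) (u_nᴴ X u_m) u_n u_mᴴ`. -/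
noncomputable def tilted {d : ℕ} (lam : Fin d → ℝ) (u : Fin d → Fin d → ℂ) (θ : ℝ)
    (X : Matrix (Fin d) (Fin d) ℂ) : Matrix (Fin d) (Fin d) ℂ :=
  ∑ n : Fin d, ∑ m : Fin d,
    ((logMean (Real.exp (θ / 2) * lam n) (Real.exp (-θ / 2) * lam m) : ℝ) : ℂ) •
      ((star (u n) ⬝ᵥ (X *ᵥ u m)) • Matrix.vecMulVec (u n) (star (u m)))

/-- Spectral (ℓ²-operator) norm of a matrix. -/
noncomputable def specNorm {d : ℕ} (Y : Matrix (Fin d) (Fin d) ℂ) : ℝ :=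
  ‖Matrix.toEuclideanCLM (𝕜 := ℂ) Y‖

lemma log_sub_log_ge (y : ℝ) (hy : 0 < y) :
    ∀ x ∈ Set.Ici y, 2 * (x - y) / (x + y) ≤ Real.log x - Real.log y := by
  have hmono : MonotoneOn (fun t => Real.log t - 2 * (t - y) / (t + y)) (Set.Ici y) := by
    have hint : interior (Set.Ici y) = Set.Ioi y := interior_Ici
    have hd : ∀ t ∈ Set.Ioi y, HasDerivAt (fun t => Real.log t - 2 * (t - y) / (t + y))
        (1 / t - 4 * y / (t + y) ^ 2) t := by
      intro t ht
      have ht' : 0 < t := lt_trans hy ht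
      have hty : t + y ≠ 0 := by positivity
      have h1 : HasDerivAt Real.log (1 / t) t := by
        simpa [one_div] using Real.hasDerivAt_log (ne_of_gt ht')
      have h2 : HasDerivAt (fun t => 2 * (t - y) / (t + y))
          ((2 * 1 * (t + y) - 2 * (t - y) * 1) / (t + y) ^ 2) t := by
        simpa using (((hasDerivAt_id t).sub_const y).const_mul 2).fun_div
          ((hasDerivAt_id t).add_const y) hty
      have h2' : (2 * 1 * (t + y) - 2 * (t - y) * 1) / (t + y) ^ 2 = 4 * y / (t + y) ^ 2 := by
        ring_nf
      rw [h2'] at h2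
      exact h1.sub h2
    apply monotoneOn_of_deriv_nonneg (convex_Ici y)
    · apply ContinuousOn.sub
      · exact Real.continuousOn_log.mono (fun t ht => by
          simp only [Set.mem_compl_iff, Set.mem_singleton_iff]
          exact ne_of_gt (lt_of_lt_of_le hy ht))
      · apply ContinuousOn.div
        · fun_prop
        · fun_prop
        · intro t ht
          have h0 : 0 < t + y := by
            have := lt_of_lt_of_le hy (Set.mem_Ici.mp ht); linarith
          exact ne_of_gt h0
    · rw [hint]
      intro t ht
      exact (hd t ht).differentiableAt.differentiableWithinAt
    · rw [hint]
      intro t ht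
      rw [(hd t ht).deriv]
      have ht' : 0 < t := lt_trans hy ht
      have h4 : 4 * y / (t + y) ^ 2 ≤ 1 / t := by
        rw [div_le_div_iff₀ (by positivity) ht']
        nlinarith [sq_nonneg (t - y)]
      linarith
  intro x hx
  have h := hmono (Set.self_mem_Ici (a := y)) hx (Set.mem_Ici.mp hx)
  simp only at h
  have h0 : 2 * (y - y) / (y + y) = 0 := by simp
  rw [h0] at h
  linarith

lemma logMean_comm (x y : ℝ) : logMean x y = logMean y x := by
  unfold logMean
  rcases eq_or_ne x y with h | h
  · simp [h]
  · rw [if_neg h, if_neg (Ne.symm h), ← neg_div_neg_eq]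
    ring_nf

lemma logMean_le_am_aux {x y : ℝ} (hy : 0 < y) (hxy : y ≤ x) : logMean x y ≤ (x + y) / 2 := by
  rcases eq_or_ne x y with h | h
  · simp [logMean, h]
  · have hlt : y < x := lt_of_le_of_ne hxy (Ne.symm h)
    rw [logMean, if_neg h]
    have hlog : 2 * (x - y) / (x + y) ≤ Real.log x - Real.log y :=
      log_sub_log_ge y hy x (le_of_lt hlt)
    have hlogpos : 0 < Real.log x - Real.log y := by
      have := Real.log_lt_log hy hlt; linarith
    rw [div_le_iff₀ hlogpos]
    have hxy0 : 0 < x + y := by linarith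
    calc x - y = (2 * (x - y) / (x + y)) * ((x + y) / 2) := by field_simp
      _ ≤ (Real.log x - Real.log y) * ((x + y) / 2) :=
          mul_le_mul_of_nonneg_right hlog (by positivity)
      _ = (x + y) / 2 * (Real.log x - Real.log y) := by ring

lemma logMean_le_am {x y : ℝ} (hx : 0 < x) (hy : 0 < y) : logMean x y ≤ (x + y) / 2 := by
  rcases le_total y x with h | h
  · exact logMean_le_am_aux hy h
  · rw [logMean_comm, add_comm]
    exact logMean_le_am_aux hx h

lemma logMean_nonneg_aux {x y : ℝ} (hy : 0 < y) (hxy : y ≤ x) : 0 ≤ logMean x y := by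
  rcases eq_or_ne x y with h | h
  · rw [logMean, if_pos h]; linarith
  · have hlt : y < x := lt_of_le_of_ne hxy (Ne.symm h)
    rw [logMean, if_neg h]
    have := Real.log_lt_log hy hlt
    apply div_nonneg <;> linarith

lemma logMean_nonneg {x y : ℝ} (hx : 0 < x) (hy : 0 < y) : 0 ≤ logMean x y := by
  rcases le_total y x with h | h
  · exact logMean_nonneg_aux hy h
  · rw [logMean_comm]; exact logMean_nonneg_aux hx h

lemma mul_star_self (z : ℂ) : z * star z = ((‖z‖ ^ 2 : ℝ) : ℂ) := by
  rw [RCLike.star_def, Complex.mul_conj]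
  simp [Complex.normSq_eq_norm_sq]

lemma star_mul_self' (z : ℂ) : star z * z = ((‖z‖ ^ 2 : ℝ) : ℂ) := by
  rw [mul_comm]; exact mul_star_self z

section matrixlemmas
variable {d : ℕ}

lemma trace_mul_vecMulVec (B : Matrix (Fin d) (Fin d) ℂ) (v w : Fin d → ℂ) :
    (B * Matrix.vecMulVec v w).trace = w ⬝ᵥ (B *ᵥ v) := by
  simp only [Matrix.trace, Matrix.diag, Matrix.mul_apply, Matrix.vecMulVec_apply, dotProduct,
    Matrix.mulVec]
  refine Finset.sum_congr rfl fun i _ => ?_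
  rw [Finset.mul_sum]
  exact Finset.sum_congr rfl fun j _ => by ring

lemma conj_dot (M : Matrix (Fin d) (Fin d) ℂ) (v w : Fin d → ℂ) :
    star w ⬝ᵥ (Mᴴ *ᵥ v) = star (star v ⬝ᵥ (M *ᵥ w)) := by
  simp only [dotProduct, Matrix.mulVec, Matrix.conjTranspose_apply, Pi.star_apply,
    star_sum, star_mul', star_star, Finset.mul_sum]
  rw [Finset.sum_comm]
  exact Finset.sum_congr rfl fun i _ => Finset.sum_congr rfl fun j _ => by ring

lemma dot_shift (M : Matrix (Fin d) (Fin d) ℂ) (v w : Fin d → ℂ) :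
    star v ⬝ᵥ (M *ᵥ w) = star (Mᴴ *ᵥ v) ⬝ᵥ w := by
  simp only [dotProduct, Matrix.mulVec, Matrix.conjTranspose_apply, Pi.star_apply,
    star_sum, star_mul', star_star, Finset.mul_sum, Finset.sum_mul]
  rw [Finset.sum_comm]
  exact Finset.sum_congr rfl fun i _ => Finset.sum_congr rfl fun j _ => by ring

variable (u : Fin d → Fin d → ℂ)
variable (horth : ∀ n m, star (u n) ⬝ᵥ u m = if n = m then 1 else 0)
include horth

lemma completeness : ∀ i j, (∑ n, star (u n i) * u n j) = if i = j then 1 else 0 := by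
  have hU : (Matrix.of u) * (Matrix.of u)ᴴ = 1 := by
    ext n m
    simp only [Matrix.mul_apply, Matrix.conjTranspose_apply, Matrix.of_apply, Matrix.one_apply]
    have h1 : ∑ i, u n i * star (u m i) = star (star (u n) ⬝ᵥ u m) := by
      simp only [dotProduct, star_sum, star_mul', star_star, Pi.star_apply]
      try exact Finset.sum_congr rfl fun i _ => by ring
    rw [h1, horth n m]
    try simp [apply_ite (star : ℂ → ℂ)]
  have hUU : (Matrix.of u)ᴴ * (Matrix.of u) = 1 := mul_eq_one_comm.mp hU
  intro i j
  have h := congrFun (congrFun hUU i) j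
  simpa [Matrix.mul_apply, Matrix.conjTranspose_apply, Matrix.one_apply] using h

lemma parseval1 (w : Fin d → ℂ) :
    ∑ n, ‖star (u n) ⬝ᵥ w‖ ^ 2 = ∑ i, ‖w i‖ ^ 2 := by
  have hcomp := completeness u horth
  have key : (∑ n, (star (u n) ⬝ᵥ w) * star (star (u n) ⬝ᵥ w)) = ∑ i, w i * star (w i) := by
    have expand : ∀ n, (star (u n) ⬝ᵥ w) * star (star (u n) ⬝ᵥ w)
        = ∑ i, ∑ j, star (u n i) * w i * (u n j * star (w j)) := by
      intro n
      simp only [dotProduct, star_sum, star_mul', star_star, Pi.star_apply, Finset.sum_mul_sum]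
    simp_rw [expand]
    rw [Finset.sum_comm]
    have swap2 : ∀ i, (∑ n, ∑ j, star (u n i) * w i * (u n j * star (w j)))
        = ∑ j, ∑ n, star (u n i) * w i * (u n j * star (w j)) := fun i => Finset.sum_comm
    simp_rw [swap2]
    have inner : ∀ i j, (∑ n, star (u n i) * w i * (u n j * star (w j)))
        = w i * star (w j) * (if i = j then 1 else 0) := by
      intro i j
      rw [← hcomp i j, Finset.mul_sum]
      exact Finset.sum_congr rfl fun n _ => by ring
    simp_rw [inner]
    simp [mul_ite, Finset.sum_ite_eq]
  have h2 : ((∑ n, ‖star (u n) ⬝ᵥ w‖ ^ 2 : ℝ) : ℂ) = ((∑ i, ‖w i‖ ^ 2 : ℝ) : ℂ) := by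
    rw [Complex.ofReal_sum, Complex.ofReal_sum]
    simp_rw [← mul_star_self]
    exact key
  exact_mod_cast h2

lemma parseval2 (v : Fin d → ℂ) :
    ∑ m, ‖v ⬝ᵥ u m‖ ^ 2 = ∑ i, ‖v i‖ ^ 2 := by
  have h1 : ∀ m, ‖v ⬝ᵥ u m‖ = ‖star (u m) ⬝ᵥ star v‖ := by
    intro m
    have h : star (u m) ⬝ᵥ star v = star (v ⬝ᵥ u m) := by
      simp only [dotProduct, star_sum, star_mul', Pi.star_apply]
      exact Finset.sum_congr rfl fun i _ => by ring
    rw [h, norm_star]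
  simp_rw [h1]
  rw [parseval1 u horth (star v)]
  simp

omit horth in
lemma euclid_norm_eq (y : Fin d → ℂ) :
    ‖(WithLp.equiv 2 ((Fin d) → ℂ)).symm y‖ = Real.sqrt (∑ i, ‖y i‖ ^ 2) := by
  rw [EuclideanSpace.norm_eq]
  simp [WithLp.equiv_symm_apply]

omit horth in
lemma mulVec_norm_sq_le (M : Matrix (Fin d) (Fin d) ℂ) (x : Fin d → ℂ) :
    ∑ i, ‖(M *ᵥ x) i‖ ^ 2 ≤ specNorm M ^ 2 * ∑ i, ‖x i‖ ^ 2 := by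
  have h := (Matrix.toEuclideanCLM (𝕜 := ℂ) M).le_opNorm ((WithLp.equiv 2 _).symm x)
  have he : Matrix.toEuclideanCLM (𝕜 := ℂ) M ((WithLp.equiv 2 _).symm x)
      = (WithLp.equiv 2 _).symm (M *ᵥ x) := by
    rfl
  rw [he, euclid_norm_eq, euclid_norm_eq] at h
  have h1 : (0:ℝ) ≤ ∑ i, ‖(M *ᵥ x) i‖ ^ 2 := by positivity
  have h2 : (0:ℝ) ≤ ∑ i, ‖x i‖ ^ 2 := by positivity
  have h3 := Real.sq_sqrt h1
  have h4 := Real.sq_sqrt h2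
  have h5 := Real.sqrt_nonneg (∑ i, ‖(M *ᵥ x) i‖ ^ 2)
  have h6 := Real.sqrt_nonneg (∑ i, ‖x i‖ ^ 2)
  have h7 : (0:ℝ) ≤ specNorm M := norm_nonneg _
  have hdef : specNorm M = ‖Matrix.toEuclideanCLM (𝕜 := ℂ) M‖ := rfl
  rw [hdef]
  nlinarith

omit horth in
lemma specNorm_conjTranspose (M : Matrix (Fin d) (Fin d) ℂ) : specNorm Mᴴ = specNorm M := by
  rw [specNorm, specNorm, ← Matrix.star_eq_conjTranspose, map_star,
    ContinuousLinearMap.star_eq_adjoint]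
  exact ContinuousLinearMap.adjoint.norm_map _

omit horth in
lemma specNorm_neg (M : Matrix (Fin d) (Fin d) ℂ) : specNorm (-M) = specNorm M := by
  rw [specNorm, specNorm, map_neg, norm_neg]

omit horth in
lemma specNorm_smul (c : ℂ) (M : Matrix (Fin d) (Fin d) ℂ) :
    specNorm (c • M) = ‖c‖ * specNorm M := by
  rw [specNorm, specNorm, _root_.map_smul]
  exact norm_smul c (Matrix.toEuclideanCLM (𝕜 := ℂ) M)

omit horth in
lemma trace_tilted (lam : Fin d → ℝ) (θ : ℝ) (M : Matrix (Fin d) (Fin d) ℂ) :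
    (Mᴴ * tilted lam u θ M).trace =
      ((∑ n, ∑ m, logMean (Real.exp (θ / 2) * lam n) (Real.exp (-θ / 2) * lam m) *
        ‖star (u n) ⬝ᵥ (M *ᵥ u m)‖ ^ 2 : ℝ) : ℂ) := by
  unfold tilted
  simp_rw [Matrix.mul_sum, Matrix.trace_sum, Matrix.mul_smul, Matrix.trace_smul]
  push_cast
  refine Finset.sum_congr rfl fun n _ => Finset.sum_congr rfl fun m _ => ?_
  rw [trace_mul_vecMulVec, conj_dot, smul_eq_mul, smul_eq_mul]
  rw [mul_star_self]
  push_cast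
  ring

end matrixlemmas

theorem stmt13 (d : ℕ) (lam : Fin d → ℝ) (u : Fin d → Fin d → ℂ)
    (hpos : ∀ n, 0 < lam n)
    (horth : ∀ n m, star (u n) ⬝ᵥ u m = if n = m then 1 else 0)
    (ρ : Matrix (Fin d) (Fin d) ℂ)
    (hρ : ρ = ∑ n : Fin d, (lam n : ℂ) • Matrix.vecMulVec (u n) (star (u n)))
    (htr : ρ.trace = 1)
    (β : ℝ) (K : Type*) [Fintype K] (ω : K → ℝ) (L : K → Matrix (Fin d) (Fin d) ℂ)
    (σ : K → K) (hσ : ∀ k, σ (σ k) = k) (hω : ∀ k, ω (σ k) = -ω k)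
    (hLσ : ∀ k, L (σ k) = ((Real.exp (-(β * ω k) / 2) : ℝ) : ℂ) • (L k)ᴴ)
    (X : Matrix (Fin d) (Fin d) ℂ) (hX : Xᴴ = X) :
    ((2 : ℂ)⁻¹ * ∑ k : K, ((Real.exp (-(β * ω k) / 2) : ℝ) : ℂ) *
        ((((L k)ᴴ * X - X * (L k)ᴴ)ᴴ *
          tilted lam u (β * ω k) ((L k)ᴴ * X - X * (L k)ᴴ)).trace)).im = 0 ∧
    0 ≤ ((2 : ℂ)⁻¹ * ∑ k : K, ((Real.exp (-(β * ω k) / 2) : ℝ) : ℂ) *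
        ((((L k)ᴴ * X - X * (L k)ᴴ)ᴴ *
          tilted lam u (β * ω k) ((L k)ᴴ * X - X * (L k)ᴴ)).trace)).re ∧
    ((2 : ℂ)⁻¹ * ∑ k : K, ((Real.exp (-(β * ω k) / 2) : ℝ) : ℂ) *
        ((((L k)ᴴ * X - X * (L k)ᴴ)ᴴ *
          tilted lam u (β * ω k) ((L k)ᴴ * X - X * (L k)ᴴ)).trace)).re ≤
      (1 / 2) * ∑ k : K, specNorm (L k * X - X * L k) ^ 2 := by
  classical
  -- notation
  set A : K → Matrix (Fin d) (Fin d) ℂ := fun k => (L k)ᴴ * X - X * (L k)ᴴ with hA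
  set R : K → ℝ := fun k => ∑ n, ∑ m,
      logMean (Real.exp (β * ω k / 2) * lam n) (Real.exp (-(β * ω k) / 2) * lam m) *
        ‖star (u n) ⬝ᵥ (A k *ᵥ u m)‖ ^ 2 with hR
  have htrace : ∀ k : K, ((((L k)ᴴ * X - X * (L k)ᴴ)ᴴ *
      tilted lam u (β * ω k) ((L k)ᴴ * X - X * (L k)ᴴ)).trace) = ((R k : ℝ) : ℂ) := by
    intro k
    simp only [hR, hA]
    exact trace_tilted u lam (β * ω k) ((L k)ᴴ * X - X * (L k)ᴴ)
  have hE : ((2 : ℂ)⁻¹ * ∑ k : K, ((Real.exp (-(β * ω k) / 2) : ℝ) : ℂ) *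
        ((((L k)ᴴ * X - X * (L k)ᴴ)ᴴ *
          tilted lam u (β * ω k) ((L k)ᴴ * X - X * (L k)ᴴ)).trace))
      = (((2 : ℝ)⁻¹ * ∑ k : K, Real.exp (-(β * ω k) / 2) * R k : ℝ) : ℂ) := by
    simp_rw [htrace]
    push_cast
    ring
  rw [hE]
  have hRnn : ∀ k, 0 ≤ R k := by
    intro k
    simp only [hR]
    refine Finset.sum_nonneg fun n _ => Finset.sum_nonneg fun m _ => mul_nonneg ?_ (by positivity)
    exact logMean_nonneg (mul_pos (Real.exp_pos _) (hpos n)) (mul_pos (Real.exp_pos _) (hpos m))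
  have hsnn : (0:ℝ) ≤ (2 : ℝ)⁻¹ * ∑ k : K, Real.exp (-(β * ω k) / 2) * R k :=
    mul_nonneg (by norm_num)
      (Finset.sum_nonneg fun k _ => mul_nonneg (Real.exp_pos _).le (hRnn k))
  refine ⟨Complex.ofReal_im _, by rw [Complex.ofReal_re]; exact hsnn, ?_⟩
  rw [Complex.ofReal_re]
  -- trace of rho gives sum of eigenvalues = 1
  have htrρ : ρ.trace = ((∑ n, lam n : ℝ) : ℂ) := by
    rw [hρ, Matrix.trace_sum, Complex.ofReal_sum]
    refine Finset.sum_congr rfl fun n _ => ?_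
    rw [Matrix.trace_smul]
    have h1 : (Matrix.vecMulVec (u n) (star (u n))).trace = 1 := by
      have h := horth n n
      simp only [if_pos rfl] at h
      simp only [Matrix.trace, Matrix.diag, Matrix.vecMulVec_apply, Pi.star_apply]
      rw [show (∑ i, u n i * star (u n i)) = ∑ i, star (u n i) * u n i from
        Finset.sum_congr rfl fun i _ => mul_comm _ _]
      exact h
    rw [h1, smul_eq_mul, mul_one]
  have hlam1 : ∑ n, lam n = 1 := by
    rw [htrρ] at htr
    exact_mod_cast htr
  have hun : ∀ n, ∑ i, ‖u n i‖ ^ 2 = 1 := by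
    intro n
    have h := horth n n
    simp only [if_pos rfl] at h
    have h2 : ((∑ i, ‖u n i‖ ^ 2 : ℝ) : ℂ) = 1 := by
      rw [Complex.ofReal_sum]
      simp_rw [← star_mul_self']
      simpa [dotProduct, Pi.star_apply] using h
    exact_mod_cast h2
  -- row/column bounds
  have hsum_m : ∀ (M : Matrix (Fin d) (Fin d) ℂ) n,
      (∑ m, ‖star (u n) ⬝ᵥ (M *ᵥ u m)‖ ^ 2) ≤ specNorm M ^ 2 := by
    intro M n
    calc (∑ m, ‖star (u n) ⬝ᵥ (M *ᵥ u m)‖ ^ 2)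
        = ∑ m, ‖star (Mᴴ *ᵥ u n) ⬝ᵥ u m‖ ^ 2 := by simp_rw [dot_shift]
      _ = ∑ i, ‖star (Mᴴ *ᵥ u n) i‖ ^ 2 := parseval2 u horth _
      _ = ∑ i, ‖(Mᴴ *ᵥ u n) i‖ ^ 2 := by simp
      _ ≤ specNorm Mᴴ ^ 2 * ∑ i, ‖u n i‖ ^ 2 := mulVec_norm_sq_le _ _
      _ = specNorm M ^ 2 := by rw [specNorm_conjTranspose, hun n, mul_one]
  have hsum_n : ∀ (M : Matrix (Fin d) (Fin d) ℂ) m,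
      (∑ n, ‖star (u n) ⬝ᵥ (M *ᵥ u m)‖ ^ 2) ≤ specNorm M ^ 2 := by
    intro M m
    calc (∑ n, ‖star (u n) ⬝ᵥ (M *ᵥ u m)‖ ^ 2)
        = ∑ i, ‖(M *ᵥ u m) i‖ ^ 2 := parseval1 u horth _
      _ ≤ specNorm M ^ 2 * ∑ i, ‖u m i‖ ^ 2 := mulVec_norm_sq_le _ _
      _ = specNorm M ^ 2 := by rw [hun m, mul_one]
  -- per-k bound
  have hk : ∀ k : K, Real.exp (-(β * ω k) / 2) * R k ≤
      (specNorm (A k) ^ 2 + Real.exp (-(β * ω k)) * specNorm (A k) ^ 2) / 2 := by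
    intro k
    have he1pos := Real.exp_pos (-(β * ω k) / 2)
    have step1 : Real.exp (-(β * ω k) / 2) * R k ≤ ∑ n, ∑ m,
        (lam n / 2 + Real.exp (-(β * ω k)) * lam m / 2) *
          ‖star (u n) ⬝ᵥ (A k *ᵥ u m)‖ ^ 2 := by
      simp only [hR]
      rw [Finset.mul_sum]
      refine Finset.sum_le_sum fun n _ => ?_
      rw [Finset.mul_sum]
      refine Finset.sum_le_sum fun m _ => ?_
      have hq : (0:ℝ) ≤ ‖star (u n) ⬝ᵥ (A k *ᵥ u m)‖ ^ 2 := by positivity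
      have hcle : Real.exp (-(β * ω k) / 2) *
          logMean (Real.exp (β * ω k / 2) * lam n) (Real.exp (-(β * ω k) / 2) * lam m)
          ≤ lam n / 2 + Real.exp (-(β * ω k)) * lam m / 2 := by
        have h1 := logMean_le_am (mul_pos (Real.exp_pos (β * ω k / 2)) (hpos n))
          (mul_pos (Real.exp_pos (-(β * ω k) / 2)) (hpos m))
        have e11 : Real.exp (-(β * ω k) / 2) * Real.exp (β * ω k / 2) = 1 := by
          rw [← Real.exp_add, show -(β * ω k) / 2 + β * ω k / 2 = 0 by ring, Real.exp_zero]
        have e12 : Real.exp (-(β * ω k) / 2) * Real.exp (-(β * ω k) / 2)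
            = Real.exp (-(β * ω k)) := by
          rw [← Real.exp_add, show -(β * ω k) / 2 + -(β * ω k) / 2 = -(β * ω k) by ring]
        have h2 : Real.exp (-(β * ω k) / 2) *
            ((Real.exp (β * ω k / 2) * lam n + Real.exp (-(β * ω k) / 2) * lam m) / 2)
            = lam n / 2 + Real.exp (-(β * ω k)) * lam m / 2 := by
          linear_combination (lam n / 2) * e11 + (lam m / 2) * e12
        calc Real.exp (-(β * ω k) / 2) * logMean _ _
            ≤ Real.exp (-(β * ω k) / 2) *
              ((Real.exp (β * ω k / 2) * lam n + Real.exp (-(β * ω k) / 2) * lam m) / 2) :=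
              mul_le_mul_of_nonneg_left h1 he1pos.le
          _ = _ := h2
      calc Real.exp (-(β * ω k) / 2) * (logMean (Real.exp (β * ω k / 2) * lam n)
              (Real.exp (-(β * ω k) / 2) * lam m) * ‖star (u n) ⬝ᵥ (A k *ᵥ u m)‖ ^ 2)
          = (Real.exp (-(β * ω k) / 2) * logMean (Real.exp (β * ω k / 2) * lam n)
              (Real.exp (-(β * ω k) / 2) * lam m)) * ‖star (u n) ⬝ᵥ (A k *ᵥ u m)‖ ^ 2 := by
            ring
        _ ≤ _ := mul_le_mul_of_nonneg_right hcle hq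
    have hsplit : (∑ n, ∑ m, (lam n / 2 + Real.exp (-(β * ω k)) * lam m / 2) *
          ‖star (u n) ⬝ᵥ (A k *ᵥ u m)‖ ^ 2)
        = (∑ n, (lam n / 2) * ∑ m, ‖star (u n) ⬝ᵥ (A k *ᵥ u m)‖ ^ 2)
          + ∑ m, (Real.exp (-(β * ω k)) * lam m / 2) *
            ∑ n, ‖star (u n) ⬝ᵥ (A k *ᵥ u m)‖ ^ 2 := by
      simp_rw [add_mul, Finset.sum_add_distrib, Finset.mul_sum]
      congr 1
      exact Finset.sum_comm
    have b1 : (∑ n, (lam n / 2) * ∑ m, ‖star (u n) ⬝ᵥ (A k *ᵥ u m)‖ ^ 2)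
        ≤ specNorm (A k) ^ 2 / 2 := by
      calc (∑ n, (lam n / 2) * ∑ m, ‖star (u n) ⬝ᵥ (A k *ᵥ u m)‖ ^ 2)
          ≤ ∑ n, (lam n / 2) * specNorm (A k) ^ 2 :=
            Finset.sum_le_sum fun n _ =>
              mul_le_mul_of_nonneg_left (hsum_m (A k) n) (by have := hpos n; linarith)
        _ = (∑ n, lam n) * (specNorm (A k) ^ 2 / 2) := by
            rw [Finset.sum_mul]
            exact Finset.sum_congr rfl fun n _ => by ring
        _ = specNorm (A k) ^ 2 / 2 := by rw [hlam1, one_mul]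
    have b2 : (∑ m, (Real.exp (-(β * ω k)) * lam m / 2) *
          ∑ n, ‖star (u n) ⬝ᵥ (A k *ᵥ u m)‖ ^ 2)
        ≤ Real.exp (-(β * ω k)) * specNorm (A k) ^ 2 / 2 := by
      calc (∑ m, (Real.exp (-(β * ω k)) * lam m / 2) *
            ∑ n, ‖star (u n) ⬝ᵥ (A k *ᵥ u m)‖ ^ 2)
          ≤ ∑ m, (Real.exp (-(β * ω k)) * lam m / 2) * specNorm (A k) ^ 2 :=
            Finset.sum_le_sum fun m _ => mul_le_mul_of_nonneg_left (hsum_n (A k) m)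
              (by have := hpos m; have := (Real.exp_pos (-(β * ω k))).le; positivity)
        _ = (∑ m, lam m) * (Real.exp (-(β * ω k)) * specNorm (A k) ^ 2 / 2) := by
            rw [Finset.sum_mul]
            exact Finset.sum_congr rfl fun m _ => by ring
        _ = Real.exp (-(β * ω k)) * specNorm (A k) ^ 2 / 2 := by rw [hlam1, one_mul]
    calc Real.exp (-(β * ω k) / 2) * R k ≤ _ := step1
      _ = _ := hsplit
      _ ≤ specNorm (A k) ^ 2 / 2 + Real.exp (-(β * ω k)) * specNorm (A k) ^ 2 / 2 :=
          add_le_add b1 b2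
      _ = (specNorm (A k) ^ 2 + Real.exp (-(β * ω k)) * specNorm (A k) ^ 2) / 2 := by ring
  -- relating norms
  have hNA : ∀ k, specNorm (A k) = specNorm (L k * X - X * L k) := by
    intro k
    have h1 : A k = -((L k * X - X * L k)ᴴ) := by
      simp only [hA, Matrix.conjTranspose_sub, Matrix.conjTranspose_mul, hX, neg_sub]
    rw [h1, specNorm_neg, specNorm_conjTranspose]
  have hNσ : ∀ k, specNorm (L (σ k) * X - X * L (σ k)) ^ 2
      = Real.exp (-(β * ω k)) * specNorm (A k) ^ 2 := by
    intro k
    have h1 : L (σ k) * X - X * L (σ k) = ((Real.exp (-(β * ω k) / 2) : ℝ) : ℂ) • A k := by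
      rw [hLσ k]
      simp only [hA, Matrix.smul_mul, Matrix.mul_smul, smul_sub]
    rw [h1, specNorm_smul, Complex.norm_real, Real.norm_eq_abs,
      abs_of_pos (Real.exp_pos _), mul_pow, pow_two, ← Real.exp_add,
      show -(β * ω k) / 2 + -(β * ω k) / 2 = -(β * ω k) by ring]
  have hperm : (∑ k : K, specNorm (L (σ k) * X - X * L (σ k)) ^ 2)
      = ∑ k : K, specNorm (L k * X - X * L k) ^ 2 :=
    (Function.Involutive.bijective hσ).sum_comp
      (fun k => specNorm (L k * X - X * L k) ^ 2)
  calc (2 : ℝ)⁻¹ * ∑ k : K, Real.exp (-(β * ω k) / 2) * R k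
      ≤ (2 : ℝ)⁻¹ * ∑ k : K,
          (specNorm (A k) ^ 2 + Real.exp (-(β * ω k)) * specNorm (A k) ^ 2) / 2 :=
        mul_le_mul_of_nonneg_left (Finset.sum_le_sum fun k _ => hk k) (by norm_num)
    _ = (2 : ℝ)⁻¹ * ∑ k : K, (specNorm (L k * X - X * L k) ^ 2
          + specNorm (L (σ k) * X - X * L (σ k)) ^ 2) / 2 := by
        refine congrArg _ (Finset.sum_congr rfl fun k _ => ?_)
        rw [← hNσ k, hNA k]
    _ = (2 : ℝ)⁻¹ * (((∑ k : K, specNorm (L k * X - X * L k) ^ 2)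
          + ∑ k : K, specNorm (L (σ k) * X - X * L (σ k)) ^ 2) / 2) := by
        rw [← Finset.sum_add_distrib, ← Finset.sum_div]
    _ = (1 / 2) * ∑ k : K, specNorm (L k * X - X * L k) ^ 2 := by
        rw [hperm]
        ring
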